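/- arXiv:2205.08176 — 3 statements merged into one kernel-verified Lean document; each statement's English description precedes it below -/
import Mathlib

section
/- Let x ∈ ℝ^d, η > 0, q ∈ ℝ^d, and let x⁺ be the Euclidean projection of x − ηq onto the probability simplex. For indices a, b, if η(q_a − q_b) > 1 + (x_a − x_b), then x⁺_a = 0. -/
/-- let `x⁺` be the Euclidean projection of `x − ηq` onto the probability
simplex, written in the form `((x − ηq) + α·1)₊` with the normalization `∑ x⁺ = 1`.
If `η(q_a − q_b) > 1 + (x a − x_b)`, then `x⁺_a = 0`. -/
theorem projected_gradient_vanish (d : ℕ) (x q : Fin d → ℝ) (η : ℝ) (hη : 0 < η)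
    (α : ℝ) (xplus : Fin d → ℝ)
    (hform : ∀ k, xplus k = max (x k - η * q k + α) 0)
    (hsum : (∑ k, xplus k) = 1)
    (a b : Fin d)
    (hgap : η * (q a - q b) > 1 + (x a - x b)) :
    xplus a = 0 := by
  have hnn : ∀ k, 0 ≤ xplus k := fun k => (hform k) ▸ le_max_right _ _
  have hb1 : xplus b ≤ 1 := hsum ▸
    Finset.single_le_sum (fun k _ => hnn k) (Finset.mem_univ b)
  have hb2 : x b - η * q b + α ≤ 1 := le_trans (by rw [hform b]; exact le_max_left _ _) hb1
  rw [hform a, max_eq_right]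
  linarith
end

section
/- Consider policy mirror descent with Euclidean Bregman divergence (h(p) = ½‖p‖₂²) and constant step size η ≥ 8/Δ in a finite discounted MDP with rewards in [0,1]. Suppose Q_{s,a}(π^{(k)}) − Q*_{s,a} ≤ A_k for all s, a, where A_k = (γ r_ρ/(k+1))(1/(η(1−γ)) + 1/(1−γ)²). Then for all k ≥ K := ⌈(2 r_ρ/Δ)(1/(η(1−γ)) + 1/(1−γ)²)⌉ we have η(Δ − A_k) > 4, and consequently π^{(k+1)}_s ∈ Π*_s for every state s. -/
set_option maxHeartbeats 1000000


/-- policy mirror descent with the Euclidean Bregman divergence and a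
constant step size `η ≥ 8/Δ` terminates at an optimal policy in finite time: once
`k ≥ K = ⌈(2 r_ρ/Δ)(1/(η(1−γ)) + 1/(1−γ)²)⌉` we have `η(Δ − A_k) > 4` and
`π^{(k+1)}_s ∈ Π*_s` (i.e. `π^{(k+1)}_s` is supported on optimal actions) for every `s`. -/
theorem pmd_euclidean_finite_convergence
    (S A : Type*) [Fintype S] [Fintype A] [Nonempty S] [Nonempty A]
    (γ : ℝ) (hγ : γ ∈ Set.Ico (0 : ℝ) 1)
    (rρ : ℝ) (hrρ : 0 < rρ)
    (Δ : ℝ) (hΔ : 0 < Δ)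
    (η : ℝ) (hη : η ≥ 8 / Δ)
    (Qstar : S → A → ℝ) (Vstar : S → ℝ)
    (hV : ∀ s, Vstar s = Finset.univ.inf' Finset.univ_nonempty (fun a => Qstar s a))
    -- optimal advantage gap: every non-optimal action is at least Δ-suboptimal
    (hgap : ∀ s a, Qstar s a ≠ Vstar s → Qstar s a - Vstar s ≥ Δ)
    -- Q-values along the iterates
    (Q : ℕ → S → A → ℝ)
    (hQ_ge : ∀ k s a, Qstar s a ≤ Q k s a)
    -- the assumed convergence rate of the Q-values
    (Aseq : ℕ → ℝ)
    (hAseq : ∀ k, Aseq k =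
      (γ * rρ / (k + 1)) * (1 / (η * (1 - γ)) + 1 / (1 - γ) ^ 2))
    (hQ_rate : ∀ k s a, Q k s a - Qstar s a ≤ Aseq k)
    -- the PMD iterates: points of the simplex minimizing the Euclidean PMD subproblem
    (π : ℕ → S → A → ℝ)
    (hπ_simplex : ∀ k s, (∑ a, π k s a) = 1 ∧ ∀ a, 0 ≤ π k s a)
    (hupdate : ∀ k s, ∀ p : A → ℝ, ((∑ a, p a) = 1 ∧ ∀ a, 0 ≤ p a) →
      η * (∑ a, Q k s a * π (k + 1) s a) + (1 / 2) * ∑ a, (π (k + 1) s a - π k s a) ^ 2 ≤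
        η * (∑ a, Q k s a * p a) + (1 / 2) * ∑ a, (p a - π k s a) ^ 2)
    (K : ℕ)
    (hK : K = ⌈(2 * rρ / Δ) * (1 / (η * (1 - γ)) + 1 / (1 - γ) ^ 2)⌉₊) :
    ∀ k ≥ K, η * (Δ - Aseq k) > 4 ∧
      ∀ s a, Qstar s a ≠ Vstar s → π (k + 1) s a = 0 := by
  classical
  obtain ⟨hγ0, hγ1⟩ := hγ
  have h1γ : 0 < 1 - γ := by linarith
  have hηpos : 0 < η := lt_of_lt_of_le (by positivity) hη
  have hηΔ : 8 ≤ η * Δ := by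
    have h := (div_le_iff₀ hΔ).mp hη
    linarith [h]
  set C : ℝ := 1 / (η * (1 - γ)) + 1 / (1 - γ) ^ 2 with hCdef
  have hC : 0 < C := by rw [hCdef]; positivity
  clear_value C
  intro k hk
  -- k + 1 exceeds the threshold
  have hv : (2 * rρ / Δ) * C ≤ (K : ℝ) := by
    rw [hK]; exact Nat.le_ceil _
  have hkK : (K : ℝ) ≤ (k : ℝ) := Nat.cast_le.mpr hk
  have hk1 : (2 * rρ * C) / Δ < (k : ℝ) + 1 := by
    have : (2 * rρ * C) / Δ = (2 * rρ / Δ) * C := by ring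
    rw [this]; linarith
  have hk1' : 2 * rρ * C < ((k : ℝ) + 1) * Δ := (div_lt_iff₀ hΔ).mp hk1
  have hA : Aseq k < Δ / 2 := by
    rw [hAseq]
    rw [div_mul_eq_mul_div, div_lt_iff₀ (by positivity : (0:ℝ) < (k : ℝ) + 1)]
    have h2 : γ * rρ * C ≤ rρ * C := by nlinarith [mul_pos hrρ hC]
    linarith [hk1', h2]
  have hmain : η * (Δ - Aseq k) > 4 := by
    nlinarith [mul_pos hηpos (show (0:ℝ) < Δ / 2 - Aseq k by linarith), hηΔ]
  refine ⟨hmain, ?_⟩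
  intro s a ha
  obtain ⟨a', -, ha'⟩ := Finset.exists_mem_eq_inf' (Finset.univ_nonempty) (fun b => Qstar s b)
  have hVa' : Qstar s a' = Vstar s := by rw [hV s, ha']
  have haa' : a ≠ a' := by
    intro h; exact ha (h ▸ hVa')
  -- gap between current Q-values
  have hQgap : Q k s a - Q k s a' ≥ Δ - Aseq k := by
    have h1 := hgap s a ha
    have h2 := hQ_ge k s a
    have h3 := hQ_rate k s a'
    linarith
  have hηQ : η * (Q k s a - Q k s a') > 4 := by
    have := mul_le_mul_of_nonneg_left hQgap hηpos.le
    linarith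
  set x : A → ℝ := π (k + 1) s with hxdef
  set y : A → ℝ := π k s with hydef
  obtain ⟨hxsum, hxnn⟩ := hπ_simplex (k + 1) s
  obtain ⟨hysum, hynn⟩ := hπ_simplex k s
  -- the perturbed point: move all mass from a to a'
  set p : A → ℝ := fun b => if b = a then 0 else if b = a' then x a' + x a else x b with hpdef
  have hpsum : (∑ b, p b) = 1 := by
    have hd : ∀ b, p b = x b + ((if b = a' then x a else 0) - (if b = a then x a else 0)) := by
      intro b
      by_cases h1 : b = a
      · subst h1; simp [hpdef, haa']
      · by_cases h2 : b = a'
        · subst h2; simp [hpdef, h1] <;> ring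
        · simp [hpdef, h1, h2]
    simp only [hd]
    rw [Finset.sum_add_distrib, Finset.sum_sub_distrib, hxsum]
    simp [Finset.sum_ite_eq']
  have hpnn : ∀ b, 0 ≤ p b := by
    intro b
    by_cases h1 : b = a
    · simp [hpdef, h1, haa']
    · by_cases h2 : b = a'
      · simp only [hpdef, if_neg h1, if_pos h2]
        exact add_nonneg (hxnn a') (hxnn a)
      · simp [hpdef, h1, h2]; exact hxnn b
  have H := hupdate k s p ⟨hpsum, hpnn⟩
  -- rewrite the linear part
  have hQp : (∑ b, Q k s b * p b) =
      (∑ b, Q k s b * x b) + ((Q k s a' * x a) - (Q k s a * x a)) := by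
    have hd : ∀ b, Q k s b * p b = Q k s b * x b
        + ((if b = a' then Q k s a' * x a else 0) - (if b = a then Q k s a * x a else 0)) := by
      intro b
      by_cases h1 : b = a
      · subst h1; simp [hpdef, haa']
      · by_cases h2 : b = a'
        · subst h2; simp [hpdef, h1] <;> ring
        · simp [hpdef, h1, h2]
    simp only [hd]
    rw [Finset.sum_add_distrib, Finset.sum_sub_distrib]
    simp [Finset.sum_ite_eq']
  -- rewrite the quadratic part
  have hSq : (∑ b, (p b - y b) ^ 2) =
      (∑ b, (x b - y b) ^ 2)
      + (((y a) ^ 2 - (x a - y a) ^ 2) + ((x a' + x a - y a') ^ 2 - (x a' - y a') ^ 2)) := by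
    have hd : ∀ b, (p b - y b) ^ 2 = (x b - y b) ^ 2
        + ((if b = a then (y a) ^ 2 - (x a - y a) ^ 2 else 0)
          + (if b = a' then (x a' + x a - y a') ^ 2 - (x a' - y a') ^ 2 else 0)) := by
      intro b
      by_cases h1 : b = a
      · subst h1; simp [hpdef, haa'] <;> ring
      · by_cases h2 : b = a'
        · subst h2; simp [hpdef, h1] <;> ring
        · simp [hpdef, h1, h2]
    simp only [hd]
    rw [Finset.sum_add_distrib, Finset.sum_add_distrib]
    simp [Finset.sum_ite_eq']
  rw [hQp, hSq] at H
  -- core inequality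
  have Hcore : x a * (η * (Q k s a - Q k s a')) ≤ x a * (y a + x a' - y a') := by
    nlinarith [H]
  -- bounds on simplex entries
  have hya1 : y a ≤ 1 := by
    have := Finset.single_le_sum (fun b _ => hynn b) (Finset.mem_univ a)
    linarith [hysum ▸ this]
  have hxa'1 : x a' ≤ 1 := by
    have := Finset.single_le_sum (fun b _ => hxnn b) (Finset.mem_univ a')
    linarith [hxsum ▸ this]
  by_contra hne
  have ht : 0 < x a := lt_of_le_of_ne (hxnn a) (Ne.symm hne)
  have h4 : x a * 4 < x a * (η * (Q k s a - Q k s a')) :=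
    mul_lt_mul_of_pos_left hηQ ht
  have h5 : x a * (y a + x a' - y a') ≤ x a * 2 :=
    mul_le_mul_of_nonneg_left (by linarith [hynn a', hynn a, hxnn a']) ht.le
  linarith
end

section
/- Let π^{(k)} evolve by multiplicative weights π^{(k+1)}_a ∝ π^{(k)}_a e^{−η q^{(k)}_a} from the uniform distribution on A, with constant step η > 0. Suppose for every k, q^{(k)}_a − q^{(k)}_b ≥ Δ − A_k for all a ∈ B, b ∈ G, where the sequence A_k satisfies ∑_{i=0}^{k−1} A_i ≤ C(1 + ln k) for a constant C. Then for a ∈ B, b ∈ G: log(π^{(k)}_a/π^{(k)}_b) ≤ −kηΔ + ηC(1 + ln k), hence ∑_{a ∈ B} π^{(k)}_a ≤ |A| e^{−kηΔ + ηC(1+ln k)}. -/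
open Finset

/-- multiplicative weights from the uniform distribution with a constant
step `η` and per-step gaps `q^{(k)}_a − q^{(k)}_b ≥ Δ − A_k` (with
`∑_{i<k} A_i ≤ C(1 + ln k)`) gives, for bad `a ∈ B` and good `b ∈ G`,
`log(π^{(k)}_a/π^{(k)}_b) ≤ −kηΔ + ηC(1 + ln k)`, and hence
`∑_{a ∈ B} π^{(k)}_a ≤ |A| e^{−kηΔ + ηC(1+ln k)}`. -/
theorem kl_md_linear_convergence (A : Type*) [Fintype A] [Nonempty A] [DecidableEq A]
    (π : ℕ → A → ℝ) (q : ℕ → A → ℝ) (η : ℝ) (hη : 0 < η)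
    (hπ_pos : ∀ k a, 0 < π k a)
    (hπ_sum : ∀ k, (∑ a, π k a) = 1)
    (hπ0 : ∀ a, π 0 a = 1 / (Fintype.card A : ℝ))
    (Z : ℕ → ℝ) (hZ : ∀ k, 0 < Z k)
    (hupdate : ∀ k a, π (k + 1) a = π k a * Real.exp (-η * q k a) / Z k)
    (G B : Finset A)
    (hGB_disj : Disjoint G B) (hGB_union : G ∪ B = Finset.univ)
    (hG_ne : G.Nonempty) (hB_ne : B.Nonempty)
    (Δ : ℝ) (hΔ : 0 < Δ) (C : ℝ) (hC : 0 ≤ C)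
    (Aseq : ℕ → ℝ)
    (hgap : ∀ k, ∀ a ∈ B, ∀ b ∈ G, q k a - q k b ≥ Δ - Aseq k)
    (hAsum : ∀ k : ℕ, 1 ≤ k → (∑ i ∈ range k, Aseq i) ≤ C * (1 + Real.log k)) :
    ∀ k : ℕ, 1 ≤ k →
      (∀ a ∈ B, ∀ b ∈ G,
        Real.log (π k a / π k b) ≤ -(k * η * Δ) + η * C * (1 + Real.log k)) ∧
      (∑ a ∈ B, π k a) ≤
        (Fintype.card A : ℝ) * Real.exp (-(k * η * Δ) + η * C * (1 + Real.log k)) := by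
  -- closed form of the ratio
  have hratio : ∀ k a b, π k a / π k b =
      Real.exp (-η * ∑ i ∈ range k, (q i a - q i b)) := by
    intro k
    induction k with
    | zero =>
      intro a b
      simp [hπ0]
    | succ n ih =>
      intro a b
      have hb := (hπ_pos n b).ne'
      have hZn := (hZ n).ne'
      have hexpb : Real.exp (-η * q n b) ≠ 0 := (Real.exp_pos _).ne'
      rw [hupdate n a, hupdate n b]
      have hrw : -η * ∑ i ∈ range (n+1), (q i a - q i b)
          = (-η * ∑ i ∈ range n, (q i a - q i b)) + (-η * q n a - -η * q n b) := by
        rw [Finset.sum_range_succ]; ring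
      rw [hrw, Real.exp_add, ← ih a b, Real.exp_sub]
      field_simp
  intro k hk
  have key : ∀ a ∈ B, ∀ b ∈ G,
      Real.log (π k a / π k b) ≤ -(k * η * Δ) + η * C * (1 + Real.log k) := by
    intro a ha b hb
    rw [hratio k a b, Real.log_exp]
    have hsum : (k : ℝ) * Δ - ∑ i ∈ range k, Aseq i ≤ ∑ i ∈ range k, (q i a - q i b) := by
      have : ∑ i ∈ range k, (Δ - Aseq i) ≤ ∑ i ∈ range k, (q i a - q i b) :=
        Finset.sum_le_sum fun i _ => hgap i a ha b hb
      simpa [Finset.sum_sub_distrib, Finset.sum_const, Finset.card_range, nsmul_eq_mul] using this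
    have hA := hAsum k hk
    have : -η * ∑ i ∈ range k, (q i a - q i b) ≤ -η * ((k : ℝ) * Δ - ∑ i ∈ range k, Aseq i) := by
      apply mul_le_mul_of_nonpos_left hsum (by linarith)
    calc -η * ∑ i ∈ range k, (q i a - q i b)
        ≤ -η * ((k : ℝ) * Δ - ∑ i ∈ range k, Aseq i) := this
      _ = -(k * η * Δ) + η * (∑ i ∈ range k, Aseq i) := by ring
      _ ≤ -(k * η * Δ) + η * (C * (1 + Real.log k)) := by nlinarith
      _ = -(k * η * Δ) + η * C * (1 + Real.log k) := by ring
  refine ⟨key, ?_⟩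
  obtain ⟨b, hb⟩ := hG_ne
  have hπb1 : π k b ≤ 1 := by
    rw [← hπ_sum k]
    exact Finset.single_le_sum (f := π k) (fun a _ => (hπ_pos k a).le) (Finset.mem_univ b)
  have hbd : ∀ a ∈ B, π k a ≤ Real.exp (-(k * η * Δ) + η * C * (1 + Real.log k)) := by
    intro a ha
    have h1 := key a ha b hb
    have hpos : 0 < π k a / π k b := div_pos (hπ_pos k a) (hπ_pos k b)
    have h2 : π k a / π k b ≤ Real.exp (-(k * η * Δ) + η * C * (1 + Real.log k)) := by
      rw [← Real.exp_log hpos]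
      exact Real.exp_le_exp.2 h1
    calc π k a = π k a / π k b * π k b := by
          rw [div_mul_cancel₀ _ (hπ_pos k b).ne']
      _ ≤ Real.exp (-(k * η * Δ) + η * C * (1 + Real.log k)) * 1 := by
          apply mul_le_mul h2 hπb1 (hπ_pos k b).le (Real.exp_pos _).le
      _ = _ := mul_one _
  calc (∑ a ∈ B, π k a) ≤ ∑ a ∈ B, Real.exp (-(k * η * Δ) + η * C * (1 + Real.log k)) :=
        Finset.sum_le_sum hbd
    _ = (B.card : ℝ) * Real.exp (-(k * η * Δ) + η * C * (1 + Real.log k)) := by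
        rw [Finset.sum_const, nsmul_eq_mul]
    _ ≤ (Fintype.card A : ℝ) * Real.exp (-(k * η * Δ) + η * C * (1 + Real.log k)) := by
        apply mul_le_mul_of_nonneg_right _ (Real.exp_pos _).le
        exact_mod_cast Finset.card_le_card (Finset.subset_univ B)
end
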